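/- Let f : ℝⁿ → ℝ be a convex function, x₀ ∈ ℝⁿ, λ ≥ 0, and let v be a standard Gaussian vector on ℝⁿ. For σ > 0 let x*(σλ, σv) be the unique minimizer over x of σλ f(x) + (1/2)‖(x₀+σv) − x‖₂². Then lim_{σ→0} E[‖x*(σλ, σv) − x₀‖₂²]/σ² = D(λ∂f(x₀)). -/

import Mathlib

/-!
Put `z_σ = σ⁻¹ (x*(σλ, σw) - x₀)`, let `p = λ s` be the projection of `w` onto
`K = λ ∂f(x₀)` and `u = w - p`. Testing the optimality condition of the proximal problem at
`x₀ + σ u` and using the subgradient inequality for `s` gives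
`‖z_σ - u‖² ≤ λ (f(x₀ + σ u) - f(x₀)) / σ - ⟪u, p⟫`. As `σ ↓ 0` the right side tends to
`λ f'(x₀; u) - ⟪u, p⟫ ≤ 0`, because `f'(x₀; ·)` is the support function of `∂f(x₀)`
(Hahn–Banach) and `p` maximizes `⟪u, ·⟫` on `K`. So `‖z_σ‖² → ‖u‖² = dist(w, K)²` for every `w`.
The proximal map is nonexpansive and sends `x₀ + σλ s₀` to `x₀` for any `s₀ ∈ ∂f(x₀)`, so
`‖z_σ‖ ≤ ‖w - λ s₀‖`, a Gaussian-integrable bound, and dominated convergence concludes.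
-/

open MeasureTheory ProbabilityTheory Filter Topology Metric
open scoped RealInnerProductSpace ENNReal Pointwise Matrix

noncomputable section

/-- Standard Gaussian measure on `ℝⁿ` (mean zero, identity covariance). -/
def stdGaussian (n : ℕ) : Measure (EuclideanSpace ℝ (Fin n)) :=
  Measure.map (⇑(EuclideanSpace.equiv (Fin n) ℝ).symm)
    (Measure.pi fun _ : Fin n => gaussianReal 0 1)

/-- `D(K)`: mean squared distance of a standard Gaussian vector to `K`. -/
def msd (n : ℕ) (K : Set (EuclideanSpace ℝ (Fin n))) : ℝ :=
  ∫ g, (Metric.infDist g K) ^ 2 ∂(stdGaussian n)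

variable {E : Type*} [NormedAddCommGroup E] [InnerProductSpace ℝ E]

/-- Subdifferential of `f` at `x₀`. -/
def subdiff (f : E → ℝ) (x₀ : E) : Set E :=
  {s | ∀ x, f x₀ + ⟪s, x - x₀⟫ ≤ f x}

/-- Cone generated by a set: `{c • x : c ≥ 0, x ∈ A}`. -/
def coneOf (A : Set E) : Set E :=
  {y | ∃ c : ℝ, 0 ≤ c ∧ ∃ x ∈ A, y = c • x}

/-- Set of feasible directions of `C` at `x₀`. -/
def feasible (C : Set E) (x₀ : E) : Set E := {z | x₀ + z ∈ C}

/-- Tangent cone of `C` at `x₀`: the closure of the cone of feasible directions. -/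
def tangentConeOf (C : Set E) (x₀ : E) : Set E := closure (coneOf (feasible C x₀))

/-- Polar cone of a set `K`. -/
def polarCone (K : Set E) : Set E := {v | ∀ x ∈ K, ⟪v, x⟫ ≤ 0}

open Classical in
/-- Metric projection onto `K` (the unique nearest point when `K` is nonempty,
closed and convex). -/
def projSet (K : Set E) (x : E) : E :=
  if h : ∃ y ∈ K, dist x y = Metric.infDist x K then h.choose else x

/-- Matrix-vector multiplication as a map between Euclidean spaces. -/
def matVec {m n : ℕ} (A : Matrix (Fin m) (Fin n) ℝ) (x : EuclideanSpace ℝ (Fin n)) :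
    EuclideanSpace ℝ (Fin m) :=
  (EuclideanSpace.equiv (Fin m) ℝ).symm (A.mulVec (EuclideanSpace.equiv (Fin n) ℝ x))

/-- Statistical dimension of `K`: `E ‖Proj(g,K)‖²` for standard Gaussian `g`. -/
def statDim (n : ℕ) (K : Set (EuclideanSpace ℝ (Fin n))) : ℝ :=
  ∫ g, ‖projSet K g‖ ^ 2 ∂(stdGaussian n)

end

/-- Borel/product measurable structure on real matrices. -/
instance matrixMeasurableSpace {m n : ℕ} : MeasurableSpace (Matrix (Fin m) (Fin n) ℝ) :=
  (inferInstance : MeasurableSpace (Fin m → Fin n → ℝ))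

open Set

section DirectionalDerivative

variable {E : Type*} [AddCommGroup E] [Module ℝ E] {f : E → ℝ}

/-- The one-sided directional derivative `f'(x₀; u)`: for convex `f` the difference quotients
decrease as `t ↓ 0`, so their limit is their infimum (`ConvexOn.tendsto_slope_line_dirDeriv`). -/
noncomputable def dirDeriv (f : E → ℝ) (x₀ u : E) : ℝ :=
  sInf (slope (fun t : ℝ => f (x₀ + t • u)) 0 '' Ioi 0)

lemma slope_line_apply (f : E → ℝ) (x₀ u : E) (t : ℝ) :
    slope (fun t : ℝ => f (x₀ + t • u)) 0 t = (f (x₀ + t • u) - f x₀) / t := by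
  simp [slope_def_field]

lemma ConvexOn.comp_add_smul (hf : ConvexOn ℝ univ f) (x₀ u : E) :
    ConvexOn ℝ univ fun t : ℝ => f (x₀ + t • u) := by
  have h := hf.comp_affineMap (AffineMap.lineMap x₀ (x₀ + u))
  rw [preimage_univ] at h
  refine h.congr fun t _ => ?_
  simp [AffineMap.lineMap_apply_module', add_comm]

lemma ConvexOn.slope_line_neg_one_le (hf : ConvexOn ℝ univ f) (x₀ u : E) {t : ℝ} (ht : 0 < t) :
    slope (fun t : ℝ => f (x₀ + t • u)) 0 (-1) ≤ slope (fun t : ℝ => f (x₀ + t • u)) 0 t :=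
  (hf.comp_add_smul x₀ u).slope_mono (mem_univ 0) ⟨mem_univ _, by norm_num⟩ ⟨mem_univ _, ht.ne'⟩
    (by linarith)

lemma ConvexOn.tendsto_slope_line_dirDeriv (hf : ConvexOn ℝ univ f) (x₀ u : E) :
    Tendsto (slope (fun t : ℝ => f (x₀ + t • u)) 0) (𝓝[>] 0) (𝓝 (dirDeriv f x₀ u)) :=
  ((hf.comp_add_smul x₀ u).monotoneOn_slope_gt (mem_univ 0)).mono (fun t ht => ⟨mem_univ t, ht⟩)
    |>.tendsto_nhdsGT ⟨_, forall_mem_image.2 fun _ ht => hf.slope_line_neg_one_le x₀ u ht⟩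

lemma ConvexOn.dirDeriv_le_slope_line (hf : ConvexOn ℝ univ f) (x₀ u : E) {t : ℝ} (ht : 0 < t) :
    dirDeriv f x₀ u ≤ slope (fun t : ℝ => f (x₀ + t • u)) 0 t :=
  csInf_le ⟨_, forall_mem_image.2 fun _ ht => hf.slope_line_neg_one_le x₀ u ht⟩ ⟨t, ht, rfl⟩

lemma ConvexOn.tendsto_slope_line_mul_dirDeriv (hf : ConvexOn ℝ univ f) (x₀ u : E) {c : ℝ}
    (hc : 0 < c) :
    Tendsto (fun t => slope (fun t : ℝ => f (x₀ + t • u)) 0 (c * t)) (𝓝[>] 0)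
      (𝓝 (dirDeriv f x₀ u)) := by
  refine (hf.tendsto_slope_line_dirDeriv x₀ u).comp ?_
  refine tendsto_nhdsWithin_of_tendsto_nhds_of_eventually_within _ ?_ ?_
  · simpa using ((continuous_const_mul c).tendsto 0).mono_left nhdsWithin_le_nhds
  · exact eventually_nhdsWithin_of_forall fun t ht => mul_pos hc ht

@[simp]
lemma dirDeriv_zero (f : E → ℝ) (x₀ : E) : dirDeriv f x₀ 0 = 0 := by
  have h (t : ℝ) : slope (fun t : ℝ => f (x₀ + t • (0 : E))) 0 t = 0 := by
    simp [slope_def_field]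
  simp only [dirDeriv, h, nonempty_Ioi.image_const, csInf_singleton]

lemma ConvexOn.dirDeriv_smul (hf : ConvexOn ℝ univ f) (x₀ u : E) {c : ℝ} (hc : 0 < c) :
    dirDeriv f x₀ (c • u) = c * dirDeriv f x₀ u := by
  refine tendsto_nhds_unique (hf.tendsto_slope_line_dirDeriv x₀ (c • u)) ?_
  refine ((hf.tendsto_slope_line_mul_dirDeriv x₀ u hc).const_mul c).congr' ?_
  filter_upwards [self_mem_nhdsWithin] with t ht
  rw [slope_line_apply, slope_line_apply, smul_smul, mul_comm t c]
  field_simp [(mem_Ioi.1 ht).ne']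

lemma ConvexOn.dirDeriv_add_le (hf : ConvexOn ℝ univ f) (x₀ u v : E) :
    dirDeriv f x₀ (u + v) ≤ dirDeriv f x₀ u + dirDeriv f x₀ v := by
  refine le_of_tendsto_of_tendsto (hf.tendsto_slope_line_dirDeriv x₀ (u + v))
    ((hf.tendsto_slope_line_mul_dirDeriv x₀ u two_pos).add
      (hf.tendsto_slope_line_mul_dirDeriv x₀ v two_pos)) ?_
  filter_upwards [self_mem_nhdsWithin] with t (ht : 0 < t)
  have hmid := hf.2 (mem_univ (x₀ + (2 * t) • u)) (mem_univ (x₀ + (2 * t) • v))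
    (by norm_num : (0:ℝ) ≤ 1 / 2) (by norm_num : (0:ℝ) ≤ 1 / 2) (by norm_num)
  have hcomb : (1 / 2 : ℝ) • (x₀ + (2 * t) • u) + (1 / 2 : ℝ) • (x₀ + (2 * t) • v)
      = x₀ + t • (u + v) := by module
  rw [hcomb, smul_eq_mul, smul_eq_mul] at hmid
  simp only [slope_line_apply]
  rw [div_add_div _ _ (by positivity) (by positivity), div_le_div_iff₀ ht (by positivity)]
  nlinarith

lemma ConvexOn.dirDeriv_add_dirDeriv_neg_nonneg (hf : ConvexOn ℝ univ f) (x₀ u : E) :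
    0 ≤ dirDeriv f x₀ u + dirDeriv f x₀ (-u) := by
  simpa using hf.dirDeriv_add_le x₀ u (-u)

lemma ConvexOn.mul_dirDeriv_le (hf : ConvexOn ℝ univ f) (x₀ u : E) (c : ℝ) :
    c * dirDeriv f x₀ u ≤ dirDeriv f x₀ (c • u) := by
  rcases lt_trichotomy c 0 with hc | rfl | hc
  · rw [show c • u = (-c) • -u by module, hf.dirDeriv_smul x₀ (-u) (neg_pos.2 hc)]
    nlinarith [hf.dirDeriv_add_dirDeriv_neg_nonneg x₀ u]
  · simp
  · rw [hf.dirDeriv_smul x₀ u hc]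

end DirectionalDerivative

section Subdifferential

variable {E : Type*} [NormedAddCommGroup E] [InnerProductSpace ℝ E] {f : E → ℝ} {x₀ s : E}

lemma inner_le_dirDeriv_of_mem_subdiff (hs : s ∈ subdiff f x₀) (u : E) :
    ⟪s, u⟫ ≤ dirDeriv f x₀ u := by
  refine le_csInf (nonempty_Ioi.image _) (forall_mem_image.2 fun t (ht : 0 < t) => ?_)
  have h := hs (x₀ + t • u)
  rw [add_sub_cancel_left, real_inner_smul_right] at h
  rw [slope_line_apply, le_div_iff₀ ht]
  linarith

lemma ConvexOn.mem_subdiff_of_inner_le_dirDeriv (hf : ConvexOn ℝ univ f)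
    (h : ∀ u, ⟪s, u⟫ ≤ dirDeriv f x₀ u) : s ∈ subdiff f x₀ := by
  intro x
  have h1 := (h (x - x₀)).trans (hf.dirDeriv_le_slope_line x₀ (x - x₀) one_pos)
  rw [slope_line_apply, one_smul, add_sub_cancel, div_one] at h1
  linarith

/-- Hahn–Banach, applied to the sublinear functional `f'(x₀; ·)`. -/
lemma ConvexOn.exists_mem_subdiff_inner_eq_dirDeriv [FiniteDimensional ℝ E]
    (hf : ConvexOn ℝ univ f) (x₀ u : E) : ∃ s ∈ subdiff f x₀, ⟪s, u⟫ = dirDeriv f x₀ u := by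
  let g₀ : E →ₗ.[ℝ] ℝ := LinearPMap.mkSpanSingleton' u (dirDeriv f x₀ u) fun c hc => by
    rcases eq_or_ne c 0 with rfl | hc0
    · simp
    · simp [(smul_eq_zero.1 hc).resolve_left hc0]
  have hg₀ : ∀ x : g₀.domain, g₀ x ≤ dirDeriv f x₀ x := by
    rintro ⟨x, hx⟩
    obtain ⟨c, rfl⟩ := Submodule.mem_span_singleton.1 hx
    rw [LinearPMap.mkSpanSingleton'_apply, smul_eq_mul]
    exact hf.mul_dirDeriv_le x₀ u c
  obtain ⟨g, hg_ext, hg_le⟩ := exists_extension_of_le_sublinear g₀ (dirDeriv f x₀)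
    (fun c hc x => hf.dirDeriv_smul x₀ x hc) (hf.dirDeriv_add_le x₀) hg₀
  set s := (InnerProductSpace.toDual ℝ E).symm (LinearMap.toContinuousLinearMap g)
  have hs (x : E) : ⟪s, x⟫ = g x := by simp [s, InnerProductSpace.toDual_symm_apply]
  refine ⟨s, hf.mem_subdiff_of_inner_le_dirDeriv fun v => (hs v).trans_le (hg_le v), ?_⟩
  rw [hs, hg_ext ⟨u, Submodule.mem_span_singleton_self u⟩]
  exact LinearPMap.mkSpanSingleton'_apply_self _ _ _ _

lemma ConvexOn.subdiff_nonempty [FiniteDimensional ℝ E] (hf : ConvexOn ℝ univ f) (x₀ : E) :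
    (subdiff f x₀).Nonempty :=
  let ⟨s, hs, _⟩ := hf.exists_mem_subdiff_inner_eq_dirDeriv x₀ 0
  ⟨s, hs⟩

lemma convex_subdiff (f : E → ℝ) (x₀ : E) : Convex ℝ (subdiff f x₀) := by
  intro s hs t ht a b ha hb hab x
  rw [inner_add_left, real_inner_smul_left, real_inner_smul_left]
  have hfx₀ : f x₀ = a * f x₀ + b * f x₀ := by rw [← add_mul, hab, one_mul]
  have hfx : f x = a * f x + b * f x := by rw [← add_mul, hab, one_mul]
  nlinarith [mul_le_mul_of_nonneg_left (hs x) ha, mul_le_mul_of_nonneg_left (ht x) hb]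

lemma isClosed_subdiff (f : E → ℝ) (x₀ : E) : IsClosed (subdiff f x₀) := by
  simp only [subdiff, ofPred_forall]
  exact isClosed_iInter fun x => isClosed_le (by fun_prop) continuous_const

end Subdifferential

section Proximal

variable {E : Type*} [NormedAddCommGroup E] [InnerProductSpace ℝ E] {f : E → ℝ} {c : ℝ}

lemma norm_sub_sq_recenter (y a x : E) :
    ‖y - x‖ ^ 2 = ‖y - a‖ ^ 2 - 2 * ⟪y - a, x - a⟫ + ‖x - a‖ ^ 2 := by
  rw [← sub_sub_sub_cancel_right y x a, norm_sub_sq_real]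

/-- The optimality condition `y - a ∈ c ∂f(a)` of the proximal problem. -/
lemma ConvexOn.inner_sub_le_of_isMinOn (hf : ConvexOn ℝ univ f) (hc : 0 ≤ c) {y a : E}
    (ha : IsMinOn (fun x => c * f x + 1 / 2 * ‖y - x‖ ^ 2) univ a) (x : E) :
    ⟪y - a, x - a⟫ ≤ c * (f x - f a) := by
  have step : ∀ t : ℝ, 0 < t → t ≤ 1 →
      ⟪y - a, x - a⟫ ≤ c * (f x - f a) + t / 2 * ‖x - a‖ ^ 2 := by
    intro t ht ht1
    have hmin : c * f a + 1 / 2 * ‖y - a‖ ^ 2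
        ≤ c * f (a + t • (x - a)) + 1 / 2 * ‖y - (a + t • (x - a))‖ ^ 2 :=
      isMinOn_iff.1 ha _ (mem_univ _)
    have hconv : f (a + t • (x - a)) ≤ (1 - t) * f a + t * f x := by
      have h := hf.2 (mem_univ a) (mem_univ x) (sub_nonneg.2 ht1) ht.le (sub_add_cancel 1 t)
      rwa [show (1 - t) • a + t • x = a + t • (x - a) by module] at h
    rw [norm_sub_sq_recenter y a (a + _), add_sub_cancel_left, real_inner_smul_right, norm_smul,
      Real.norm_of_nonneg ht.le] at hmin
    nlinarith [mul_le_mul_of_nonneg_left hconv hc]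
  have hlim : Tendsto (fun t : ℝ => c * (f x - f a) + t / 2 * ‖x - a‖ ^ 2) (𝓝[>] 0)
      (𝓝 (c * (f x - f a))) := by
    have h : Continuous fun t : ℝ => c * (f x - f a) + t / 2 * ‖x - a‖ ^ 2 := by fun_prop
    simpa using (h.tendsto 0).mono_left nhdsWithin_le_nhds
  refine ge_of_tendsto hlim ?_
  filter_upwards [Ioc_mem_nhdsGT one_pos] with t ht using step t ht.1 ht.2

lemma isMinOn_of_mem_subdiff {a s : E} (hs : s ∈ subdiff f a) (hc : 0 ≤ c) :
    IsMinOn (fun x => c * f x + 1 / 2 * ‖(a + c • s) - x‖ ^ 2) univ a := by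
  refine isMinOn_iff.2 fun x _ => ?_
  rw [norm_sub_sq_recenter _ a x, add_sub_cancel_left, real_inner_smul_left]
  nlinarith [mul_le_mul_of_nonneg_left (hs x) hc, sq_nonneg ‖x - a‖]

lemma ConvexOn.norm_sub_le_of_isMinOn (hf : ConvexOn ℝ univ f) (hc : 0 ≤ c) {y y' a b : E}
    (ha : IsMinOn (fun x => c * f x + 1 / 2 * ‖y - x‖ ^ 2) univ a)
    (hb : IsMinOn (fun x => c * f x + 1 / 2 * ‖y' - x‖ ^ 2) univ b) :
    ‖a - b‖ ≤ ‖y - y'‖ := by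
  have hab := hf.inner_sub_le_of_isMinOn hc ha b
  have hba := hf.inner_sub_le_of_isMinOn hc hb a
  have hfirm : ‖a - b‖ ^ 2 ≤ ⟪y - y', a - b⟫ := by
    have e1 : b - a = -(a - b) := (neg_sub a b).symm
    have e2 : y - a = (y - y') - (a - b) + (y' - b) := by abel
    rw [e1, e2, inner_neg_right, inner_add_left, inner_sub_left, real_inner_self_eq_norm_sq]
      at hab
    linarith
  have hcs := real_inner_le_norm (y - y') (a - b)
  rcases (norm_nonneg (a - b)).eq_or_lt with h0 | hpos
  · exact h0 ▸ norm_nonneg _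
  · nlinarith

lemma ConvexOn.lipschitzWith_of_isMinOn {F : Type*} [PseudoMetricSpace F]
    (hf : ConvexOn ℝ univ f) (hc : 0 ≤ c) {K : NNReal} {y : F → E} (hy : LipschitzWith K y)
    {x : F → E} (hx : ∀ w, IsMinOn (fun z => c * f z + 1 / 2 * ‖y w - z‖ ^ 2) univ (x w)) :
    LipschitzWith K x :=
  LipschitzWith.of_dist_le_mul fun w w' => by
    rw [dist_eq_norm]
    exact (hf.norm_sub_le_of_isMinOn hc (hx w) (hx w')).trans
      (by simpa [dist_eq_norm] using hy.dist_le_mul w w')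

end Proximal

lemma tendsto_of_norm_sub_sq_le {E α : Type*} [SeminormedAddCommGroup E] {l : Filter α}
    {z : α → E} {u : E} {g : α → ℝ} {c : ℝ} (hg : Tendsto g l (𝓝 c)) (hc : c ≤ 0)
    (hzg : ∀ᶠ i in l, ‖z i - u‖ ^ 2 ≤ g i) :
    Tendsto z l (𝓝 u) := by
  rw [tendsto_iff_norm_sub_tendsto_zero]
  have hsqrt : Tendsto (fun i => √(max (g i) 0)) l (𝓝 0) := by
    simpa [max_eq_right hc] using (hg.max (tendsto_const_nhds (x := (0 : ℝ)))).sqrt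
  refine squeeze_zero' (Eventually.of_forall fun _ => norm_nonneg _) ?_ hsqrt
  filter_upwards [hzg] with i hi
  simpa using Real.abs_le_sqrt (hi.trans (le_max_left _ 0))

section SmallNoise

variable {E : Type*} [NormedAddCommGroup E] [InnerProductSpace ℝ E] {f : E → ℝ} {lam : ℝ}

lemma ConvexOn.norm_inv_smul_sub_sq_le (hf : ConvexOn ℝ univ f) (hlam : 0 ≤ lam) {x₀ s : E}
    (hs : s ∈ subdiff f x₀) {σ : ℝ} (hσ : 0 < σ) {w a : E}
    (ha : IsMinOn (fun x => σ * lam * f x + 1 / 2 * ‖(x₀ + σ • w) - x‖ ^ 2) univ a) :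
    ‖σ⁻¹ • (a - x₀) - (w - lam • s)‖ ^ 2
      ≤ lam * slope (fun t : ℝ => f (x₀ + t • (w - lam • s))) 0 σ - ⟪w - lam • s, lam • s⟫ := by
  set u := w - lam • s
  set v := a - x₀
  have hopt := hf.inner_sub_le_of_isMinOn (mul_nonneg hσ.le hlam) ha (x₀ + σ • u)
  rw [show x₀ + σ • w - a = (σ • u - v) + σ • (lam • s) by simp only [u, v]; module,
    show x₀ + σ • u - a = σ • u - v by simp only [v]; abel] at hopt
  have hexpand : ⟪(σ • u - v) + σ • (lam • s), σ • u - v⟫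
      = ‖σ • u - v‖ ^ 2 + σ * lam * (σ * ⟪s, u⟫ - ⟪s, v⟫) := by
    rw [inner_add_left, real_inner_self_eq_norm_sq, real_inner_smul_left, real_inner_smul_left,
      inner_sub_right, real_inner_smul_right]
    ring
  rw [hexpand] at hopt
  have hsub : f x₀ + ⟪s, v⟫ ≤ f a := by simpa [v] using hs a
  have hscale : ‖σ⁻¹ • v - u‖ ^ 2 = ‖σ • u - v‖ ^ 2 / σ ^ 2 := by
    rw [show σ⁻¹ • v - u = σ⁻¹ • -(σ • u - v) by
        rw [smul_neg, smul_sub σ⁻¹ (σ • u) v, smul_smul, inv_mul_cancel₀ hσ.ne', one_smul,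
          neg_sub],
      norm_smul, norm_neg, mul_pow, norm_inv, Real.norm_of_nonneg hσ.le, inv_pow, inv_mul_eq_div]
  rw [hscale, slope_line_apply, div_le_iff₀ (by positivity), real_inner_smul_right,
    real_inner_comm]
  have hσlam : 0 ≤ σ * lam := mul_nonneg hσ.le hlam
  field_simp
  nlinarith [mul_le_mul_of_nonneg_left hsub hσlam]

lemma ConvexOn.tendsto_norm_sub_sq_div_sq [FiniteDimensional ℝ E] (hf : ConvexOn ℝ univ f)
    (hlam : 0 ≤ lam) {x₀ w : E} {x : ℝ → E}
    (hx : ∀ σ : ℝ, 0 < σ →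
      IsMinOn (fun z => σ * lam * f z + 1 / 2 * ‖(x₀ + σ • w) - z‖ ^ 2) univ (x σ)) :
    Tendsto (fun σ => ‖x σ - x₀‖ ^ 2 / σ ^ 2) (𝓝[>] 0)
      (𝓝 (infDist w (lam • subdiff f x₀) ^ 2)) := by
  set K := lam • subdiff f x₀
  have hKne : K.Nonempty := (hf.subdiff_nonempty x₀).smul_set
  have hKconv : Convex ℝ K := (convex_subdiff f x₀).smul lam
  have hKcl : IsClosed K := (isClosed_subdiff f x₀).smul₀ lam
  obtain ⟨p, hpK, hp⟩ := exists_norm_eq_iInf_of_complete_convex hKne hKcl.isComplete hKconv w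
  have hproj := (norm_eq_iInf_iff_real_inner_le_zero hKconv hpK).1 hp
  obtain ⟨s, hs, rfl⟩ := hpK
  set u := w - lam • s
  have hsupport : lam * dirDeriv f x₀ u ≤ ⟪u, lam • s⟫ := by
    obtain ⟨su, hsu, hsu_eq⟩ := hf.exists_mem_subdiff_inner_eq_dirDeriv x₀ u
    have h := hproj _ (smul_mem_smul_set hsu)
    rw [inner_sub_right, real_inner_smul_right, real_inner_comm, hsu_eq] at h
    linarith
  have hlim : Tendsto (fun σ => σ⁻¹ • (x σ - x₀)) (𝓝[>] 0) (𝓝 u) := by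
    refine tendsto_of_norm_sub_sq_le
      (((hf.tendsto_slope_line_dirDeriv x₀ u).const_mul lam).sub_const ⟪u, lam • s⟫)
      (sub_nonpos.2 hsupport) ?_
    filter_upwards [self_mem_nhdsWithin] with σ (hσ : 0 < σ)
    exact hf.norm_inv_smul_sub_sq_le hlam hs hσ (hx σ hσ)
  have hdist : infDist w K = ‖u‖ := by
    rw [infDist_eq_iInf, hp]
    simp_rw [dist_eq_norm]
  rw [hdist]
  refine (hlim.norm.pow 2).congr' ?_
  filter_upwards [self_mem_nhdsWithin] with σ (hσ : 0 < σ)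
  rw [norm_smul, mul_pow, norm_inv, Real.norm_of_nonneg hσ.le, inv_pow, inv_mul_eq_div]

end SmallNoise

lemma stdGaussian_eq_stdGaussian (n : ℕ) :
    _root_.stdGaussian n = ProbabilityTheory.stdGaussian (EuclideanSpace ℝ (Fin n)) :=
  map_pi_eq_stdGaussian

lemma integrable_norm_sub_sq_stdGaussian {n : ℕ} (c : EuclideanSpace ℝ (Fin n)) :
    Integrable (fun w => ‖w - c‖ ^ 2) (_root_.stdGaussian n) := by
  rw [stdGaussian_eq_stdGaussian]
  exact (IsGaussian.memLp_two_id.sub (memLp_const c)).integrable_norm_pow'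

/-- Stochastic lower bound: NMSE in the small-noise limit.
For convex `f`, `λ ≥ 0` and standard Gaussian noise, the NMSE of the proximity
operator converges to `D(λ∂f(x₀))` as `σ → 0`. -/
theorem statement11 {n : ℕ} (f : EuclideanSpace ℝ (Fin n) → ℝ)
    (hf : ConvexOn ℝ Set.univ f) (x₀ : EuclideanSpace ℝ (Fin n))
    (lam : ℝ) (hlam : 0 ≤ lam)
    (xstar : ℝ → EuclideanSpace ℝ (Fin n) → EuclideanSpace ℝ (Fin n))
    (hxstar : ∀ σ : ℝ, 0 < σ → ∀ w,
      IsMinOn (fun x => σ * lam * f x + (1 / 2) * ‖(x₀ + σ • w) - x‖ ^ 2)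
        Set.univ (xstar σ w)) :
    Tendsto (fun σ : ℝ => (∫ w, ‖xstar σ w - x₀‖ ^ 2 ∂(stdGaussian n)) / σ ^ 2)
      (nhdsWithin 0 (Set.Ioi 0)) (nhds (msd n (lam • subdiff f x₀))) := by
  obtain ⟨s₀, hs₀⟩ := hf.subdiff_nonempty x₀
  simp_rw [← integral_div]
  refine tendsto_integral_filter_of_dominated_convergence (fun w => ‖w - lam • s₀‖ ^ 2) ?_ ?_
    (integrable_norm_sub_sq_stdGaussian _)
    (ae_of_all _ fun w => hf.tendsto_norm_sub_sq_div_sq hlam fun σ hσ => hxstar σ hσ w)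
  · filter_upwards [self_mem_nhdsWithin] with σ (hσ : 0 < σ)
    have hlip := hf.lipschitzWith_of_isMinOn (mul_nonneg hσ.le hlam)
      ((LipschitzWith.const x₀).add (lipschitzWith_smul (β := EuclideanSpace ℝ (Fin n)) σ))
      (hxstar σ hσ)
    exact (((hlip.continuous.sub continuous_const).norm.pow 2).div_const _).aestronglyMeasurable
  · filter_upwards [self_mem_nhdsWithin] with σ (hσ : 0 < σ)
    refine ae_of_all _ fun w => ?_
    have hbound := hf.norm_sub_le_of_isMinOn (mul_nonneg hσ.le hlam) (hxstar σ hσ w)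
      (isMinOn_of_mem_subdiff hs₀ (mul_nonneg hσ.le hlam))
    rw [show x₀ + σ • w - (x₀ + (σ * lam) • s₀) = σ • (w - lam • s₀) by module, norm_smul,
      Real.norm_of_nonneg hσ.le] at hbound
    rw [Real.norm_of_nonneg (by positivity), div_le_iff₀ (by positivity)]
    nlinarith [pow_le_pow_left₀ (norm_nonneg _) hbound 2]
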